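/- For every poset P and all positive integers m and n, the lattice Co(P) satisfies the identity (H_{m,n}) if and only if lh(P) ≤ m + n − 1. -/

import Mathlib

/-! Common definitions: lattices of order-convex subsets of a poset,
length of a poset, the identities (S), (U), (B), (L2), (H_n), (H_{m,n}),
join-irreducibility, the join-dependency relation, join-seeds,
the posets P_{I,J}, tree-like posets, D-closed sets,
and complete lattice congruences. -/

open Set

/-- The lattice `Co P` of all order-convex subsets of a poset `P`. -/
def Co (P : Type*) [PartialOrder P] : Type _ := {s : Set P // s.OrdConnected}

namespace Co

variable {P : Type*} [PartialOrder P]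

instance : PartialOrder (Co P) := Subtype.partialOrder _

instance : InfSet (Co P) :=
  ⟨fun S => ⟨⋂ s ∈ S, s.1, Set.ordConnected_biInter fun s _ => s.2⟩⟩

noncomputable instance : CompleteLattice (Co P) :=
  completeLatticeOfInf (Co P) (by
    intro S
    constructor
    · intro t ht
      exact Set.biInter_subset_of_mem (t := fun s => s.1) ht
    · intro b hb
      exact Set.subset_iInter₂ fun t ht => hb ht)

/-- The order-convex subset of `P` with underlying set `X`. -/
def mk' (X : Set P) (hX : X.OrdConnected) : Co P := ⟨X, hX⟩

/-- The singleton `{p}`, as an order-convex set. -/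
def sngl (p : P) : Co P := ⟨{p}, Set.ordConnected_singleton⟩

/-- The empty order-convex set. -/
def emp : Co P := ⟨∅, Set.ordConnected_empty⟩

end Co

/-- `lengthLE P n` states that the poset `P` has length at most `n`, that is,
every finite chain of `P` has at most `n + 1` elements. -/
def lengthLE (P : Type*) [PartialOrder P] (n : ℕ) : Prop :=
  ∀ C : Finset P, IsChain (· ≤ ·) (C : Set P) → C.card ≤ n + 1

section Identities

/-- The Stirlitz identity (S). -/
def IdS (L : Type*) [Lattice L] : Prop :=
  ∀ a b b₀ b₁ c : L,
    a ⊓ ((b ⊓ (b₀ ⊔ b₁)) ⊔ c) =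
      (a ⊓ (b ⊓ (b₀ ⊔ b₁)))
      ⊔ (a ⊓ (b₀ ⊔ c) ⊓ ((b ⊓ (b₀ ⊔ b₁) ⊓ (a ⊔ b₀)) ⊔ c))
      ⊔ (a ⊓ (b₁ ⊔ c) ⊓ ((b ⊓ (b₀ ⊔ b₁) ⊓ (a ⊔ b₁)) ⊔ c))

/-- The Udav identity (U). -/
def IdU (L : Type*) [Lattice L] : Prop :=
  ∀ x x₀ x₁ x₂ : L,
    x ⊓ (x₀ ⊔ x₁) ⊓ (x₁ ⊔ x₂) ⊓ (x₀ ⊔ x₂) =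
      (x ⊓ x₀ ⊓ (x₁ ⊔ x₂)) ⊔ (x ⊓ x₁ ⊓ (x₀ ⊔ x₂)) ⊔ (x ⊓ x₂ ⊓ (x₀ ⊔ x₁))

/-- The Bond identity (B). -/
def IdB (L : Type*) [Lattice L] : Prop :=
  ∀ x a₀ a₁ b₀ b₁ : L,
    x ⊓ (a₀ ⊔ a₁) ⊓ (b₀ ⊔ b₁) =
      (x ⊓ a₀ ⊓ (b₀ ⊔ b₁)) ⊔ (x ⊓ a₁ ⊓ (b₀ ⊔ b₁))
      ⊔ (x ⊓ b₀ ⊓ (a₀ ⊔ a₁)) ⊔ (x ⊓ b₁ ⊓ (a₀ ⊔ a₁))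
      ⊔ (x ⊓ (a₀ ⊔ a₁) ⊓ (b₀ ⊔ b₁) ⊓ (a₀ ⊔ b₀) ⊓ (a₁ ⊔ b₁))
      ⊔ (x ⊓ (a₀ ⊔ a₁) ⊓ (b₀ ⊔ b₁) ⊓ (a₀ ⊔ b₁) ⊓ (a₁ ⊔ b₀))

/-- The identity (L₂). -/
def IdL2 (L : Type*) [Lattice L] : Prop :=
  ∀ a b b' c c' : L,
    a ⊓ ((b ⊓ (c ⊔ c')) ⊔ b') =
      (a ⊓ b ⊓ (c ⊔ c')) ⊔ (a ⊓ ((b ⊓ c) ⊔ b')) ⊔ (a ⊓ ((b ⊓ c') ⊔ b'))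

variable {L : Type*} [Lattice L]

/-- The lattice polynomial `U_{i,n}` (in the variables `x₀, …, xₙ, x'₁, …, x'ₙ`). -/
def Upoly (x x' : ℕ → L) (n : ℕ) (i : ℕ) : L :=
  if h : n ≤ i then x n
  else x i ⊓ (Upoly x x' n (i + 1) ⊔ x' (i + 1))
  termination_by n - i
  decreasing_by omega

/-- The lattice polynomial `V_{i,j,n}`. -/
def Vpoly (x x' : ℕ → L) (n i : ℕ) (j : ℕ) : L :=
  if h : i ≤ j then (x i ⊓ Upoly x x' n (i + 1)) ⊔ (x i ⊓ x' (i + 1))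
  else x j ⊓ (Vpoly x x' n i (j + 1) ⊔ x' (j + 1))
  termination_by i - j
  decreasing_by omega

/-- The lattice polynomial `W_{i,j,n}`. -/
def Wpoly (x x' : ℕ → L) (n i : ℕ) (j : ℕ) : L :=
  if h : i ≤ j then
    x i ⊓ (x' (i + 1) ⊔ x' (i + 2)) ⊓ ((Upoly x x' n (i + 1) ⊓ (x i ⊔ x' (i + 2))) ⊔ x' (i + 1))
  else x j ⊓ (Wpoly x x' n i (j + 1) ⊔ x' (j + 1))
  termination_by i - j
  decreasing_by omega

/-- `bigJoin f k = f 0 ⊔ f 1 ⊔ ⋯ ⊔ f k`. -/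
def bigJoin (f : ℕ → L) : ℕ → L
  | 0 => f 0
  | k + 1 => bigJoin f k ⊔ f (k + 1)

end Identities

/-- The identity (Hₙ) : `Uₙ = ⋁_{0 ≤ i ≤ n-1} V_{i,n} ∨ ⋁_{0 ≤ i ≤ n-2} W_{i,n}`
(intended for `n ≥ 1`). -/
def IdH (n : ℕ) (L : Type*) [Lattice L] : Prop :=
  ∀ x x' : ℕ → L,
    Upoly x x' n 0 =
      bigJoin (fun i =>
        if i + 2 ≤ n then Vpoly x x' n i 0 ⊔ Wpoly x x' n i 0 else Vpoly x x' n i 0) (n - 1)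

/-- The identity (H_{m,n}) (intended for `m, n ≥ 1`); the common base point is
`x 0 = y 0 = t`. -/
def IdHmn (m n : ℕ) (L : Type*) [Lattice L] : Prop :=
  ∀ x x' y y' : ℕ → L, x 0 = y 0 →
    Upoly x x' m 0 ⊓ Upoly y y' n 0 =
      bigJoin (fun i =>
          if i + 2 ≤ m then
            (Vpoly x x' m i 0 ⊓ Upoly y y' n 0) ⊔ (Wpoly x x' m i 0 ⊓ Upoly y y' n 0)
          else Vpoly x x' m i 0 ⊓ Upoly y y' n 0) (m - 1)
      ⊔ bigJoin (fun j =>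
          if j + 2 ≤ n then
            (Upoly x x' m 0 ⊓ Vpoly y y' n j 0) ⊔ (Upoly x x' m 0 ⊓ Wpoly y y' n j 0)
          else Upoly x x' m 0 ⊓ Vpoly y y' n j 0) (n - 1)
      ⊔ (Upoly x x' m 0 ⊓ Upoly y y' n 0 ⊓ (x 1 ⊔ y' 1) ⊓ (x' 1 ⊔ y 1))

/-- `p` is join-irreducible: `p = x ⊔ y` implies `p = x` or `p = y`. -/
def JIrr {L : Type*} [Lattice L] (p : L) : Prop :=
  ∀ x y : L, p = x ⊔ y → p = x ∨ p = y

/-- The join-dependency relation `p D q`. -/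
def DRel {L : Type*} [Lattice L] (p q : L) : Prop :=
  p ≠ q ∧ ∃ x : L, p ≤ q ⊔ x ∧ ∀ y < q, ¬ p ≤ y ⊔ x

/-- A subset `S` of a lattice `L` is a join-seed. -/
def JoinSeed (L : Type*) [Lattice L] (S : Set L) : Prop :=
  (∀ p ∈ S, JIrr p) ∧
  (∀ a : L, ∃ T ⊆ S, IsLUB T a) ∧
  (∀ p ∈ S, ∀ a b : L, p ≤ a ⊔ b → ¬ p ≤ a → ¬ p ≤ b →
    ∃ x ∈ S, ∃ y ∈ S, x ≤ a ∧ y ≤ b ∧ p ≤ x ⊔ y ∧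
      (∀ x' < x, ¬ p ≤ x' ⊔ y) ∧ (∀ y' < y, ¬ p ≤ x ⊔ y'))

/-- The poset `P_{I,J} = I ∪ {p} ∪ J`, where every element of `I` is below `p`,
`p` is below every element of `J`, every element of `I` is below every element
of `J`, and there are no other strict comparabilities. -/
def PIJ (I J : Type*) : Type _ := I ⊕ (Unit ⊕ J)

namespace PIJ

variable {I J : Type*}

/-- The rank (height) of an element of `P_{I,J}`. -/
def rank (a : PIJ I J) : ℕ :=
  Sum.elim (fun _ => 0) (Sum.elim (fun _ => 1) fun _ => 2) a

instance : PartialOrder (PIJ I J) where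
  le a b := a = b ∨ rank a < rank b
  le_refl a := Or.inl rfl
  le_trans a b c hab hbc := by
    rcases hab with rfl | h
    · exact hbc
    · rcases hbc with rfl | h'
      · exact Or.inr h
      · exact Or.inr (h.trans h')
  le_antisymm a b hab hba := by
    rcases hab with rfl | h
    · rfl
    · rcases hba with rfl | h'
      · rfl
      · omega

end PIJ

/-- A poset is tree-like if it has no infinite bounded chain and between any two
points there is at most one repetition-free finite path with respect to the
covering relation. -/
def TreeLike (P : Type*) [PartialOrder P] : Prop :=
  (∀ C : Set P, IsChain (· ≤ ·) C → BddAbove C → BddBelow C → C.Finite) ∧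
  (∀ a b : P, ∀ l₁ l₂ : List P,
    l₁.Nodup → l₁.head? = some a → l₁.getLast? = some b →
      l₁.Chain' (fun u v => u ⋖ v ∨ v ⋖ u) →
    l₂.Nodup → l₂.head? = some a → l₂.getLast? = some b →
      l₂.Chain' (fun u v => u ⋖ v ∨ v ⋖ u) →
    l₁ = l₂)

/-- A subset `U` of a poset `P` is `D`-closed. -/
def DClosed {P : Type*} [PartialOrder P] (U : Set P) : Prop :=
  ∀ x p y : P, x < p → p < y → (x ∈ U ∨ y ∈ U) → p ∈ U

/-- A complete congruence of a complete lattice. -/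
structure IsCompleteCongr {L : Type*} [CompleteLattice L] (θ : L → L → Prop) : Prop where
  refl : ∀ x, θ x x
  symm : ∀ {x y}, θ x y → θ y x
  trans : ∀ {x y z}, θ x y → θ y z → θ x z
  sup : ∀ {a b c d}, θ a b → θ c d → θ (a ⊔ c) (b ⊔ d)
  inf : ∀ {a b c d}, θ a b → θ c d → θ (a ⊓ c) (b ⊓ d)
  cSup : ∀ (x : L) (Y : Set L), Y.Nonempty → (∀ y ∈ Y, θ x y) → θ x (sSup Y)
  cInf : ∀ (x : L) (Y : Set L), Y.Nonempty → (∀ y ∈ Y, θ x y) → θ x (sInf Y)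

/-- The map `h_U : Co(P) → Co(P ∖ U)`, `X ↦ X ∖ U`. -/
def coRestrict {P : Type*} [PartialOrder P] (U : Set P) (X : Co P) :
    Co {p : P // p ∉ U} :=
  ⟨Subtype.val ⁻¹' X.1, by
    constructor
    rintro a ha b hb z hz
    exact X.2.out ha hb ⟨hz.1, hz.2⟩⟩

/-- The lattice `D(P)` of all `D`-closed subsets of a poset `P`. -/
def DSub (P : Type*) [PartialOrder P] : Type _ := {U : Set P // DClosed U}

namespace DSub

variable {P : Type*} [PartialOrder P]

instance : PartialOrder (DSub P) := Subtype.partialOrder _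

instance : InfSet (DSub P) :=
  ⟨fun S => ⟨⋂ U ∈ S, U.1, by
    intro x p y h1 h2 h3
    simp only [Set.mem_iInter] at h3 ⊢
    intro U hU
    exact U.2 x p y h1 h2 (h3.imp (fun h => h U hU) fun h => h U hU)⟩⟩

noncomputable instance : CompleteLattice (DSub P) :=
  completeLatticeOfInf (DSub P) (by
    intro S
    constructor
    · intro t ht
      exact Set.biInter_subset_of_mem (t := fun U => U.1) ht
    · intro b hb
      exact Set.subset_iInter₂ fun t ht => hb ht)

end DSub

/-! In `Co P` meets are intersections and `p ∈ X ∨ Y` means that `p` lies between two points of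
`X ∪ Y`. Unwinding `U_{i,m}` this way, a point `p` of `U_{i,m}` either lies in some `V_{k,i,m}` or
`W_{k,i,m}`, or it is the top (bottom) of a strictly descending (ascending) chain
`p = u_i, u_{i+1}, …, u_m` with `u_j ∈ U_{j,m}`, and `x'_{i+1}` has a point on the other side
of `p`.
A point of `U_m(x) ∧ U_n(y)` that lies in no `V`- or `W`-joinand therefore either lies in the last
joinand of `(H_{m,n})` (both chains run the same way) or sits in the middle of a chain of length
`m + n` (they run opposite ways). Conversely, on a chain `z_0 < ⋯ < z_{m+n}` the singletons
`x_i = {z_{m-i}}`, `x'_i = {z_{m+n}}`, `y_j = {z_{m+j}}`, `y'_j = {z_0}` make the left-hand side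
`{z_m}` and every joinand on the right empty. -/

open Order

namespace Co

variable {P : Type*} [PartialOrder P] {X Y : Co P} {a b p : P}

lemma le_def : X ≤ Y ↔ X.1 ⊆ Y.1 := Iff.rfl

lemma mem_inf : p ∈ (X ⊓ Y).1 ↔ p ∈ X.1 ∧ p ∈ Y.1 :=
  ⟨fun hp => ⟨le_def.1 inf_le_left hp, le_def.1 inf_le_right hp⟩,
    fun hp => (le_inf inter_subset_left inter_subset_right : mk' _ (X.2.inter Y.2) ≤ X ⊓ Y) hp⟩

lemma mem_sup_left (hp : p ∈ X.1) : p ∈ (X ⊔ Y).1 :=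
  (le_sup_left : X ≤ X ⊔ Y) hp

lemma mem_sup_right (hp : p ∈ Y.1) : p ∈ (X ⊔ Y).1 :=
  (le_sup_right : Y ≤ X ⊔ Y) hp

lemma mem_sup : p ∈ (X ⊔ Y).1 ↔ ∃ a ∈ X.1 ∪ Y.1, ∃ b ∈ X.1 ∪ Y.1, a ≤ p ∧ p ≤ b := by
  constructor
  · let H : Co P := mk' {q | ∃ a ∈ X.1 ∪ Y.1, ∃ b ∈ X.1 ∪ Y.1, a ≤ q ∧ q ≤ b}
      ⟨fun _ ⟨a, ha, _, _, hau, _⟩ _ ⟨_, _, b, hb, _, hvb⟩ _ hq =>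
        ⟨a, ha, b, hb, hau.trans hq.1, hq.2.trans hvb⟩⟩
    have hH : X ⊔ Y ≤ H := sup_le (fun q hq => ⟨q, .inl hq, q, .inl hq, le_rfl, le_rfl⟩)
      (fun q hq => ⟨q, .inr hq, q, .inr hq, le_rfl, le_rfl⟩)
    exact fun hp => hH hp
  · rintro ⟨a, ha, b, hb, hap, hpb⟩
    have hsub : X.1 ∪ Y.1 ⊆ (X ⊔ Y).1 := union_subset (fun _ => mem_sup_left) fun _ => mem_sup_right
    exact (X ⊔ Y).2.out (hsub ha) (hsub hb) ⟨hap, hpb⟩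

lemma mem_sup_of_le_of_le (ha : a ∈ X.1) (hb : b ∈ Y.1) (hap : a ≤ p) (hpb : p ≤ b) :
    p ∈ (X ⊔ Y).1 :=
  mem_sup.2 ⟨a, .inl ha, b, .inr hb, hap, hpb⟩

lemma mem_sup_of_ge_of_ge (ha : a ∈ X.1) (hb : b ∈ Y.1) (hbp : b ≤ p) (hpa : p ≤ a) :
    p ∈ (X ⊔ Y).1 :=
  mem_sup.2 ⟨b, .inr hb, a, .inl ha, hbp, hpa⟩

lemma val_bot : (⊥ : Co P).1 = ∅ :=
  subset_empty_iff.1 (bot_le (a := emp))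

lemma disjoint_iff_val : Disjoint X Y ↔ Disjoint X.1 Y.1 := by
  refine ⟨fun h => Set.disjoint_left.2 fun p hX hY => ?_,
    fun h Z hZX hZY q hq => (h.ne_of_mem (hZX hq) (hZY hq) rfl).elim⟩
  have hp : sngl p ≤ ⊥ := h (by rintro _ rfl; exact hX) (by rintro _ rfl; exact hY)
  simpa [val_bot] using hp rfl

lemma sngl_ne_bot (p : P) : sngl p ≠ ⊥ := fun h => by
  simpa [sngl, val_bot] using congrArg Subtype.val h

lemma sngl_le_sup_sngl (hap : a ≤ p) (hpb : p ≤ b) : sngl p ≤ sngl a ⊔ sngl b := by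
  rintro q rfl
  exact mem_sup_of_le_of_le rfl rfl hap hpb

lemma disjoint_sngl (h : a ≠ b) : Disjoint (sngl a) (sngl b) := by
  rw [disjoint_iff_val]
  exact Set.disjoint_singleton.2 h

lemma disjoint_sngl_sup_sngl (hap : a < p) (hbp : b < p) : Disjoint (sngl p) (sngl a ⊔ sngl b) := by
  rw [disjoint_iff_val]
  refine Set.disjoint_singleton_left.2 fun hp => ?_
  obtain ⟨-, -, c, hc, -, hpc⟩ := mem_sup.1 hp
  rcases hc with rfl | rfl
  exacts [hap.not_ge hpc, hbp.not_ge hpc]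

end Co

section Length

variable {P : Type*} [PartialOrder P] {N : ℕ}

lemma lengthLE.length_le (h : lengthLE P N) (s : LTSeries P) : s.length ≤ N := by
  classical
  have hchain : IsChain (· ≤ ·) ((Finset.univ.image s : Finset P) : Set P) := by
    rw [Finset.coe_image, Finset.coe_univ, Set.image_univ]
    exact s.strictMono.monotone.isChain_range
  have := h _ hchain
  rwa [Finset.card_image_of_injective _ s.strictMono.injective, Finset.card_univ,
    Fintype.card_fin, Nat.add_le_add_iff_right] at this

lemma exists_strictMonoOn_of_not_lengthLE (h : ¬ lengthLE P N) :
    ∃ z : ℕ → P, StrictMonoOn z (Set.Iic (N + 1)) := by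
  classical
  simp only [lengthLE, not_forall, not_le] at h
  obtain ⟨C, hC, hcard⟩ := h
  let := hC.linearOrder
  have hcard' : N + 2 ≤ (Finset.univ : Finset (C : Set P)).card := by
    simp only [Finset.card_univ, Finset.coe_sort_coe, Fintype.card_coe]
    omega
  let e : Fin (N + 2) ↪o (C : Set P) := Finset.orderEmbOfCardLe _ hcard'
  let f : ℕ → Fin (N + 2) := fun k => ⟨min k (N + 1), by omega⟩
  refine ⟨fun k => e (f k), fun a ha b hb hab => ?_⟩
  simp only [Set.mem_Iic] at ha hb
  have hf : f a < f b := Fin.mk_lt_mk.2 (by omega)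
  exact Subtype.coe_lt_coe.2 (e.strictMono hf)

lemma add_le_of_le_height_of_le_coheight (h : lengthLE P N) {p : P} {m n : ℕ}
    (hm : (m : ℕ∞) ≤ height p) (hn : (n : ℕ∞) ≤ coheight p) : m + n ≤ N := by
  obtain ⟨s, hs, rfl⟩ := exists_series_of_le_height p hm
  obtain ⟨t, ht, rfl⟩ := exists_series_of_le_coheight p hn
  exact h.length_le (s.smash t (hs.trans ht.symm))

end Length

section Polynomials

variable {L : Type*} [Lattice L] {x x' : ℕ → L} {n i k j : ℕ}

lemma Upoly_self (x x' : ℕ → L) (n : ℕ) : Upoly x x' n n = x n := by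
  rw [Upoly]; simp

lemma Upoly_of_lt (h : i < n) : Upoly x x' n i = x i ⊓ (Upoly x x' n (i + 1) ⊔ x' (i + 1)) := by
  rw [Upoly]; simp [Nat.not_le.2 h]

lemma Vpoly_self (x x' : ℕ → L) (n i : ℕ) :
    Vpoly x x' n i i = (x i ⊓ Upoly x x' n (i + 1)) ⊔ (x i ⊓ x' (i + 1)) := by
  rw [Vpoly]; simp

lemma Vpoly_of_lt (h : j < k) : Vpoly x x' n k j = x j ⊓ (Vpoly x x' n k (j + 1) ⊔ x' (j + 1)) := by
  rw [Vpoly]; simp [Nat.not_le.2 h]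

lemma Wpoly_self (x x' : ℕ → L) (n i : ℕ) :
    Wpoly x x' n i i = x i ⊓ (x' (i + 1) ⊔ x' (i + 2)) ⊓
      ((Upoly x x' n (i + 1) ⊓ (x i ⊔ x' (i + 2))) ⊔ x' (i + 1)) := by
  rw [Wpoly]; simp

lemma Wpoly_of_lt (h : j < k) : Wpoly x x' n k j = x j ⊓ (Wpoly x x' n k (j + 1) ⊔ x' (j + 1)) := by
  rw [Wpoly]; simp [Nat.not_le.2 h]

lemma Upoly_le (h : i ≤ n) : Upoly x x' n i ≤ x i := by
  rcases h.eq_or_lt with rfl | h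
  · rw [Upoly_self]
  · rw [Upoly_of_lt h]; exact inf_le_left

lemma Vpoly_le_Upoly (hk : k < n) (hj : j ≤ k) : Vpoly x x' n k j ≤ Upoly x x' n j := by
  induction hj using Nat.decreasingInduction with
  | self =>
    rw [Vpoly_self, Upoly_of_lt hk]
    exact sup_le (inf_le_inf_left _ le_sup_left) (inf_le_inf_left _ le_sup_right)
  | of_succ j hj ih =>
    rw [Vpoly_of_lt hj, Upoly_of_lt (hj.trans hk)]
    exact inf_le_inf_left _ (sup_le_sup_right ih _)

lemma Wpoly_le_Upoly (hk : k < n) (hj : j ≤ k) : Wpoly x x' n k j ≤ Upoly x x' n j := by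
  induction hj using Nat.decreasingInduction with
  | self =>
    rw [Wpoly_self, Upoly_of_lt hk]
    exact le_inf (inf_le_left.trans inf_le_left)
      (inf_le_right.trans (sup_le_sup_right inf_le_left _))
  | of_succ j hj ih =>
    rw [Wpoly_of_lt hj, Upoly_of_lt (hj.trans hk)]
    exact inf_le_inf_left _ (sup_le_sup_right ih _)

lemma bigJoin_le_iff {f : ℕ → L} {c : L} {K : ℕ} : bigJoin f K ≤ c ↔ ∀ k ≤ K, f k ≤ c := by
  induction K with
  | zero => simp [bigJoin]
  | succ K ih => simp [bigJoin, ih, Nat.le_succ_iff, or_imp, forall_and]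

lemma le_bigJoin (f : ℕ → L) {k K : ℕ} (h : k ≤ K) : f k ≤ bigJoin f K :=
  bigJoin_le_iff.1 le_rfl k h

end Polynomials

section HmnRhs

variable {L : Type*} [Lattice L] {m n k : ℕ} {x x' y y' : ℕ → L}

variable (m n x x' y y') in
def hmnRhs : L :=
  bigJoin (fun i =>
      if i + 2 ≤ m then
        (Vpoly x x' m i 0 ⊓ Upoly y y' n 0) ⊔ (Wpoly x x' m i 0 ⊓ Upoly y y' n 0)
      else Vpoly x x' m i 0 ⊓ Upoly y y' n 0) (m - 1)
  ⊔ bigJoin (fun j =>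
      if j + 2 ≤ n then
        (Upoly x x' m 0 ⊓ Vpoly y y' n j 0) ⊔ (Upoly x x' m 0 ⊓ Wpoly y y' n j 0)
      else Upoly x x' m 0 ⊓ Vpoly y y' n j 0) (n - 1)
  ⊔ (Upoly x x' m 0 ⊓ Upoly y y' n 0 ⊓ (x 1 ⊔ y' 1) ⊓ (x' 1 ⊔ y 1))

lemma idHmn_iff : IdHmn m n L ↔ ∀ x x' y y' : ℕ → L, x 0 = y 0 →
    Upoly x x' m 0 ⊓ Upoly y y' n 0 = hmnRhs m n x x' y y' :=
  Iff.rfl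

lemma hmnRhs_le_inf (hm : 0 < m) (hn : 0 < n) :
    hmnRhs m n x x' y y' ≤ Upoly x x' m 0 ⊓ Upoly y y' n 0 := by
  refine sup_le (sup_le (bigJoin_le_iff.2 fun k hk => ?_) (bigJoin_le_iff.2 fun k hk => ?_))
    (inf_le_left.trans inf_le_left)
  · have hV := Vpoly_le_Upoly (x := x) (x' := x') (by omega : k < m) k.zero_le
    have hW := Wpoly_le_Upoly (x := x) (x' := x') (by omega : k < m) k.zero_le
    split_ifs
    · exact sup_le (inf_le_inf_right _ hV) (inf_le_inf_right _ hW)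
    · exact inf_le_inf_right _ hV
  · have hV := Vpoly_le_Upoly (x := y) (x' := y') (by omega : k < n) k.zero_le
    have hW := Wpoly_le_Upoly (x := y) (x' := y') (by omega : k < n) k.zero_le
    split_ifs
    · exact sup_le (inf_le_inf_left _ hV) (inf_le_inf_left _ hW)
    · exact inf_le_inf_left _ hV

lemma Vpoly_inf_le_hmnRhs (hk : k < m) :
    Vpoly x x' m k 0 ⊓ Upoly y y' n 0 ≤ hmnRhs m n x x' y y' := by
  refine le_sup_of_le_left (le_sup_of_le_left (le_trans ?_ (le_bigJoin _ (by omega : k ≤ m - 1))))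
  split_ifs <;> simp

lemma Wpoly_inf_le_hmnRhs (hk : k + 2 ≤ m) :
    Wpoly x x' m k 0 ⊓ Upoly y y' n 0 ≤ hmnRhs m n x x' y y' := by
  refine le_sup_of_le_left (le_sup_of_le_left (le_trans ?_ (le_bigJoin _ (by omega : k ≤ m - 1))))
  simp [hk]

lemma inf_Vpoly_le_hmnRhs (hk : k < n) :
    Upoly x x' m 0 ⊓ Vpoly y y' n k 0 ≤ hmnRhs m n x x' y y' := by
  refine le_sup_of_le_left (le_sup_of_le_right (le_trans ?_ (le_bigJoin _ (by omega : k ≤ n - 1))))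
  split_ifs <;> simp

lemma inf_Wpoly_le_hmnRhs (hk : k + 2 ≤ n) :
    Upoly x x' m 0 ⊓ Wpoly y y' n k 0 ≤ hmnRhs m n x x' y y' := by
  refine le_sup_of_le_left (le_sup_of_le_right (le_trans ?_ (le_bigJoin _ (by omega : k ≤ n - 1))))
  simp [hk]

end HmnRhs

section Staircase

variable {L : Type*} [Lattice L] [OrderBot L] {m n i j k : ℕ} {x x' y y' : ℕ → L}

def IsStaircase (x x' : ℕ → L) (n : ℕ) : Prop :=
  ∀ j < n, x j ≤ x (j + 1) ⊔ x' (j + 1) ∧ Disjoint (x j) (x (j + 1)) ∧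
    Disjoint (x j) (x' (j + 1) ⊔ x' (j + 2))

namespace IsStaircase

lemma Upoly_eq (h : IsStaircase x x' n) (hi : i ≤ n) : Upoly x x' n i = x i := by
  induction hi using Nat.decreasingInduction with
  | self => exact Upoly_self x x' n
  | of_succ i hi ih => rw [Upoly_of_lt hi, ih, inf_eq_left.2 (h i hi).1]

lemma Vpoly_eq_bot (h : IsStaircase x x' n) (hk : k < n) (hj : j ≤ k) : Vpoly x x' n k j = ⊥ := by
  induction hj using Nat.decreasingInduction with
  | self =>
    obtain ⟨-, hxx, hxx'⟩ := h k hk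
    rw [Vpoly_self, h.Upoly_eq hk, hxx.eq_bot, (hxx'.mono_right le_sup_left).eq_bot, sup_idem]
  | of_succ j hj ih =>
    rw [Vpoly_of_lt hj, ih, bot_sup_eq]
    exact ((h j (hj.trans hk)).2.2.mono_right le_sup_left).eq_bot

lemma Wpoly_eq_bot (h : IsStaircase x x' n) (hk : k < n) (hj : j ≤ k) : Wpoly x x' n k j = ⊥ := by
  induction hj using Nat.decreasingInduction with
  | self =>
    rw [Wpoly_self, (h k hk).2.2.eq_bot, bot_inf_eq]
  | of_succ j hj ih =>
    rw [Wpoly_of_lt hj, ih, bot_sup_eq]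
    exact ((h j (hj.trans hk)).2.2.mono_right le_sup_left).eq_bot

end IsStaircase

lemma hmnRhs_eq_bot (hm : 0 < m) (hn : 0 < n) (hx : IsStaircase x x' m) (hy : IsStaircase y y' n)
    (hD : Disjoint (x 0) (x 1 ⊔ y' 1)) : hmnRhs m n x x' y y' = ⊥ := by
  refine le_bot_iff.1 (sup_le (sup_le (bigJoin_le_iff.2 fun k hk => ?_)
    (bigJoin_le_iff.2 fun k hk => ?_)) ?_)
  · have hk' : k < m := by omega
    simp [hx.Vpoly_eq_bot hk' k.zero_le, hx.Wpoly_eq_bot hk' k.zero_le]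
  · have hk' : k < n := by omega
    simp [hy.Vpoly_eq_bot hk' k.zero_le, hy.Wpoly_eq_bot hk' k.zero_le]
  · calc _ ≤ x 0 ⊓ (x 1 ⊔ y' 1) :=
          inf_le_left.trans (inf_le_inf_right _ (inf_le_left.trans (Upoly_le m.zero_le)))
      _ = ⊥ := hD.eq_bot

end Staircase

section Refutation

variable {P : Type*} [PartialOrder P] {m n : ℕ}

lemma Co.isStaircase_sngl {w : ℕ → P} {c : P}
    (h : ∀ j < n, w (j + 1) < w j ∧ w j < c ∨ c < w j ∧ w j < w (j + 1)) :
    IsStaircase (fun j => Co.sngl (w j)) (fun _ => Co.sngl c) n := by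
  intro j hj
  simp only [sup_idem]
  rcases h j hj with ⟨h₁, h₂⟩ | ⟨h₁, h₂⟩
  · exact ⟨Co.sngl_le_sup_sngl h₁.le h₂.le, Co.disjoint_sngl h₁.ne', Co.disjoint_sngl h₂.ne⟩
  · exact ⟨sup_comm (Co.sngl c) _ ▸ Co.sngl_le_sup_sngl h₁.le h₂.le, Co.disjoint_sngl h₂.ne,
      Co.disjoint_sngl h₁.ne'⟩

theorem lengthLE_of_idHmn (hm : 0 < m) (hn : 0 < n) (h : IdHmn m n (Co P)) :
    lengthLE P (m + n - 1) := by
  by_contra hlen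
  obtain ⟨z, hz⟩ := exists_strictMonoOn_of_not_lengthLE hlen
  have lt (a b : ℕ) (hab : a < b) (hb : b ≤ m + n) : z a < z b :=
    hz (Set.mem_Iic.2 (by omega)) (Set.mem_Iic.2 (by omega)) hab
  have hx : IsStaircase (fun i => Co.sngl (z (m - i))) (fun _ => Co.sngl (z (m + n))) m :=
    Co.isStaircase_sngl fun j hj => .inl ⟨lt _ _ (by omega) (by omega), lt _ _ (by omega) le_rfl⟩
  have hy : IsStaircase (fun j => Co.sngl (z (m + j))) (fun _ => Co.sngl (z 0)) n :=
    Co.isStaircase_sngl fun j hj =>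
      .inr ⟨lt _ _ (by omega) (by omega), lt _ _ (by omega) (by omega)⟩
  have hD : Disjoint (Co.sngl (z (m - 0))) (Co.sngl (z (m - 1)) ⊔ Co.sngl (z 0)) :=
    Co.disjoint_sngl_sup_sngl (lt _ _ (by omega) (by omega)) (lt _ _ hm (by omega))
  have heq := idHmn_iff.1 h (fun i => Co.sngl (z (m - i))) (fun _ => Co.sngl (z (m + n)))
    (fun j => Co.sngl (z (m + j))) (fun _ => Co.sngl (z 0)) (by simp)
  rw [hx.Upoly_eq m.zero_le, hy.Upoly_eq n.zero_le, hmnRhs_eq_bot hm hn hx hy hD] at heq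
  simp only [Nat.sub_zero, Nat.add_zero, inf_idem] at heq
  exact Co.sngl_ne_bot _ heq

end Refutation

section Membership

variable {P : Type*} [PartialOrder P] {x x' y y' : ℕ → Co P} {m n i : ℕ} {p u c d : P}

variable (x x' m) in
def InVW (i : ℕ) (p : P) : Prop :=
  (∃ k, i ≤ k ∧ k < m ∧ p ∈ (Vpoly x x' m k i).1) ∨
    ∃ k, i ≤ k ∧ k + 2 ≤ m ∧ p ∈ (Wpoly x x' m k i).1

-- `m - i ≤ height p` stands for the chain `p = u_i > u_{i+1} > ⋯ > u_m` with `u_j ∈ U_{j,m}`.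
variable (x x' m) in
def DescendsAt (i : ℕ) (p : P) : Prop :=
  ((m - i : ℕ) : ℕ∞) ≤ height p ∧ (∃ a ∈ (x (i + 1)).1, a < p) ∧ ∃ b ∈ (x' (i + 1)).1, p < b

variable (x x' m) in
def AscendsAt (i : ℕ) (p : P) : Prop :=
  ((m - i : ℕ) : ℕ∞) ≤ coheight p ∧ (∃ a ∈ (x (i + 1)).1, p < a) ∧ ∃ b ∈ (x' (i + 1)).1, b < p

lemma inVW_of_mem_Upoly (hi : i < m) (hp : p ∈ (x i).1) (hpU : p ∈ (Upoly x x' m (i + 1)).1) :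
    InVW x x' m i p :=
  .inl ⟨i, le_rfl, hi, by rw [Vpoly_self]; exact Co.mem_sup_left (Co.mem_inf.2 ⟨hp, hpU⟩)⟩

lemma inVW_of_mem_x' (hi : i < m) (hp : p ∈ (x i).1) (hpx' : p ∈ (x' (i + 1)).1) :
    InVW x x' m i p :=
  .inl ⟨i, le_rfl, hi, by rw [Vpoly_self]; exact Co.mem_sup_right (Co.mem_inf.2 ⟨hp, hpx'⟩)⟩

lemma InVW.step (hu : InVW x x' m (i + 1) u) (hp : p ∈ (x i).1) (hc : c ∈ (x' (i + 1)).1)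
    (hpuc : u ≤ p ∧ p ≤ c ∨ c ≤ p ∧ p ≤ u) : InVW x x' m i p := by
  have hmem {X : Co P} (huX : u ∈ X.1) : p ∈ (x i ⊓ (X ⊔ x' (i + 1))).1 :=
    Co.mem_inf.2 ⟨hp, hpuc.elim (fun h => Co.mem_sup_of_le_of_le huX hc h.1 h.2)
      (fun h => Co.mem_sup_of_ge_of_ge huX hc h.1 h.2)⟩
  rcases hu with ⟨k, hik, hkm, huV⟩ | ⟨k, hik, hkm, huW⟩
  · exact .inl ⟨k, by omega, hkm, by rw [Vpoly_of_lt (by omega)]; exact hmem huV⟩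
  · exact .inr ⟨k, by omega, hkm, by rw [Wpoly_of_lt (by omega)]; exact hmem huW⟩

lemma inVW_of_zigzag (hi : i + 2 ≤ m) (hp : p ∈ (x i).1) (hu : u ∈ (Upoly x x' m (i + 1)).1)
    (hc : c ∈ (x' (i + 1)).1) (hd : d ∈ (x' (i + 2)).1)
    (h : d ≤ u ∧ u ≤ p ∧ p ≤ c ∨ c ≤ p ∧ p ≤ u ∧ u ≤ d) : InVW x x' m i p := by
  refine .inr ⟨i, le_rfl, hi, ?_⟩
  rw [Wpoly_self, Co.mem_inf, Co.mem_inf]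
  rcases h with ⟨hdu, hup, hpc⟩ | ⟨hcp, hpu, hud⟩
  · exact ⟨⟨hp, Co.mem_sup_of_ge_of_ge hc hd (hdu.trans hup) hpc⟩,
      Co.mem_sup_of_le_of_le (Co.mem_inf.2 ⟨hu, Co.mem_sup_of_ge_of_ge hp hd hdu hup⟩) hc hup hpc⟩
  · exact ⟨⟨hp, Co.mem_sup_of_le_of_le hc hd hcp (hpu.trans hud)⟩,
      Co.mem_sup_of_ge_of_ge (Co.mem_inf.2 ⟨hu, Co.mem_sup_of_le_of_le hp hd hpu hud⟩) hc hcp hpu⟩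

lemma inVW_or_descendsAt (hi : i < m) (hp : p ∈ (x i).1) (hu : u ∈ (Upoly x x' m (i + 1)).1)
    (hc : c ∈ (x' (i + 1)).1) (hup : u < p) (hpc : p < c)
    (ih : i + 1 < m → InVW x x' m (i + 1) u ∨ DescendsAt x x' m (i + 1) u ∨
      AscendsAt x x' m (i + 1) u) :
    InVW x x' m i p ∨ DescendsAt x x' m i p := by
  have descends (hu' : ((m - (i + 1) : ℕ) : ℕ∞) ≤ height u) : DescendsAt x x' m i p := by
    refine ⟨?_, ⟨u, Co.le_def.1 (Upoly_le hi) hu, hup⟩, c, hc, hpc⟩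
    calc ((m - i : ℕ) : ℕ∞) = (m - (i + 1) : ℕ) + 1 := by rw [← Nat.cast_add_one]; congr 1; omega
      _ ≤ height u + 1 := by gcongr
      _ ≤ height p := height_add_one_le hup
  rcases Nat.lt_or_ge (i + 1) m with hi' | hi'
  · rcases ih hi' with hvw | hd | ⟨-, -, d, hd, hdu⟩
    · exact .inl (hvw.step hp hc (.inl ⟨hup.le, hpc.le⟩))
    · exact .inr (descends hd.1)
    · exact .inl (inVW_of_zigzag hi' hp hu hc hd (.inl ⟨hdu.le, hup.le, hpc.le⟩))
  · exact .inr (descends (by simp [show m - (i + 1) = 0 by omega]))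

lemma inVW_or_ascendsAt (hi : i < m) (hp : p ∈ (x i).1) (hu : u ∈ (Upoly x x' m (i + 1)).1)
    (hc : c ∈ (x' (i + 1)).1) (hcp : c < p) (hpu : p < u)
    (ih : i + 1 < m → InVW x x' m (i + 1) u ∨ DescendsAt x x' m (i + 1) u ∨
      AscendsAt x x' m (i + 1) u) :
    InVW x x' m i p ∨ AscendsAt x x' m i p := by
  have ascends (hu' : ((m - (i + 1) : ℕ) : ℕ∞) ≤ coheight u) : AscendsAt x x' m i p := by
    refine ⟨?_, ⟨u, Co.le_def.1 (Upoly_le hi) hu, hpu⟩, c, hc, hcp⟩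
    calc ((m - i : ℕ) : ℕ∞) = (m - (i + 1) : ℕ) + 1 := by rw [← Nat.cast_add_one]; congr 1; omega
      _ ≤ coheight u + 1 := by gcongr
      _ ≤ coheight p := coheight_add_one_le hpu
  rcases Nat.lt_or_ge (i + 1) m with hi' | hi'
  · rcases ih hi' with hvw | ⟨-, -, d, hd, hud⟩ | ha
    · exact .inl (hvw.step hp hc (.inr ⟨hcp.le, hpu.le⟩))
    · exact .inl (inVW_of_zigzag hi' hp hu hc hd (.inr ⟨hcp.le, hpu.le, hud.le⟩))
    · exact .inr (ascends ha.1)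
  · exact .inr (ascends (by simp [show m - (i + 1) = 0 by omega]))

theorem inVW_or_descendsAt_or_ascendsAt {i : ℕ} {p : P} (hi : i < m) (hp : p ∈ (Upoly x x' m i).1) :
    InVW x x' m i p ∨ DescendsAt x x' m i p ∨ AscendsAt x x' m i p := by
  rw [Upoly_of_lt hi, Co.mem_inf, Co.mem_sup] at hp
  obtain ⟨hpx, a, ha, b, hb, hap, hpb⟩ := hp
  have ih (u : P) (hu : u ∈ (Upoly x x' m (i + 1)).1) (hi' : i + 1 < m) :=
    inVW_or_descendsAt_or_ascendsAt hi' hu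
  rcases ha with ha | ha <;> rcases hb with hb | hb
  · exact .inl (inVW_of_mem_Upoly hi hpx ((Upoly x x' m (i + 1)).2.out ha hb ⟨hap, hpb⟩))
  · rcases hap.eq_or_lt with rfl | hap
    · exact .inl (inVW_of_mem_Upoly hi hpx ha)
    rcases hpb.eq_or_lt with rfl | hpb
    · exact .inl (inVW_of_mem_x' hi hpx hb)
    exact (inVW_or_descendsAt hi hpx ha hb hap hpb (ih a ha)).imp_right .inl
  · rcases hpb.eq_or_lt with rfl | hpb
    · exact .inl (inVW_of_mem_Upoly hi hpx hb)
    rcases hap.eq_or_lt with rfl | hap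
    · exact .inl (inVW_of_mem_x' hi hpx ha)
    exact (inVW_or_ascendsAt hi hpx hb ha hap hpb (ih b hb)).imp_right .inr
  · exact .inl (inVW_of_mem_x' hi hpx ((x' (i + 1)).2.out ha hb ⟨hap, hpb⟩))
termination_by m - i

lemma mem_hmnRhs_of_inVW_left (hx : InVW x x' m 0 p) (hy : p ∈ (Upoly y y' n 0).1) :
    p ∈ (hmnRhs m n x x' y y').1 := by
  rcases hx with ⟨k, -, hk, hV⟩ | ⟨k, -, hk, hW⟩
  · exact Co.le_def.1 (Vpoly_inf_le_hmnRhs hk) (Co.mem_inf.2 ⟨hV, hy⟩)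
  · exact Co.le_def.1 (Wpoly_inf_le_hmnRhs hk) (Co.mem_inf.2 ⟨hW, hy⟩)

lemma mem_hmnRhs_of_inVW_right (hx : p ∈ (Upoly x x' m 0).1) (hy : InVW y y' n 0 p) :
    p ∈ (hmnRhs m n x x' y y').1 := by
  rcases hy with ⟨k, -, hk, hV⟩ | ⟨k, -, hk, hW⟩
  · exact Co.le_def.1 (inf_Vpoly_le_hmnRhs hk) (Co.mem_inf.2 ⟨hx, hV⟩)
  · exact Co.le_def.1 (inf_Wpoly_le_hmnRhs hk) (Co.mem_inf.2 ⟨hx, hW⟩)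

lemma mem_hmnRhs_of_descendsAt (hpx : p ∈ (Upoly x x' m 0).1) (hpy : p ∈ (Upoly y y' n 0).1)
    (hx : DescendsAt x x' m 0 p) (hy : DescendsAt y y' n 0 p) : p ∈ (hmnRhs m n x x' y y').1 := by
  obtain ⟨-, ⟨a, ha, hap⟩, b, hb, hpb⟩ := hx
  obtain ⟨-, ⟨c, hc, hcp⟩, d, hd, hpd⟩ := hy
  exact Co.mem_sup_right (Co.mem_inf.2 ⟨Co.mem_inf.2 ⟨Co.mem_inf.2 ⟨hpx, hpy⟩,
    Co.mem_sup_of_le_of_le ha hd hap.le hpd.le⟩, Co.mem_sup_of_ge_of_ge hb hc hcp.le hpb.le⟩)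

lemma mem_hmnRhs_of_ascendsAt (hpx : p ∈ (Upoly x x' m 0).1) (hpy : p ∈ (Upoly y y' n 0).1)
    (hx : AscendsAt x x' m 0 p) (hy : AscendsAt y y' n 0 p) : p ∈ (hmnRhs m n x x' y y').1 := by
  obtain ⟨-, ⟨a, ha, hpa⟩, b, hb, hbp⟩ := hx
  obtain ⟨-, ⟨c, hc, hpc⟩, d, hd, hdp⟩ := hy
  exact Co.mem_sup_right (Co.mem_inf.2 ⟨Co.mem_inf.2 ⟨Co.mem_inf.2 ⟨hpx, hpy⟩,
    Co.mem_sup_of_ge_of_ge ha hd hdp.le hpa.le⟩, Co.mem_sup_of_le_of_le hb hc hbp.le hpc.le⟩)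

theorem idHmn_of_lengthLE (hm : 0 < m) (hn : 0 < n) (h : lengthLE P (m + n - 1)) :
    IdHmn m n (Co P) := by
  refine idHmn_iff.2 fun x x' y y' _ => le_antisymm (fun p hp => ?_) (hmnRhs_le_inf hm hn)
  obtain ⟨hpx, hpy⟩ := Co.mem_inf.1 hp
  by_cases hx : InVW x x' m 0 p
  · exact mem_hmnRhs_of_inVW_left hx hpy
  by_cases hy : InVW y y' n 0 p
  · exact mem_hmnRhs_of_inVW_right hpx hy
  rcases (inVW_or_descendsAt_or_ascendsAt hm hpx).resolve_left hx with hx | hx <;>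
    rcases (inVW_or_descendsAt_or_ascendsAt hn hpy).resolve_left hy with hy | hy
  · exact mem_hmnRhs_of_descendsAt hpx hpy hx hy
  · have := add_le_of_le_height_of_le_coheight h hx.1 hy.1
    omega
  · have := add_le_of_le_height_of_le_coheight h hy.1 hx.1
    omega
  · exact mem_hmnRhs_of_ascendsAt hpx hpy hx hy

end Membership

theorem stmt19 (P : Type*) [PartialOrder P] (m n : ℕ) (hm : 0 < m) (hn : 0 < n) :
    IdHmn m n (Co P) ↔ lengthLE P (m + n - 1) :=
  ⟨lengthLE_of_idHmn hm hn, idHmn_of_lengthLE hm hn⟩
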